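/- For all formulas A and B, there is a derivation from A to B using only the rules w↓, c↓, ≡ if and only if there is a derivation from A to B using only the rules w↓, w∀, ac↓, c∀, m, m∀, m∃, ≡. -/

import Mathlib

set_option linter.unusedVariables false

/-! ## First-order terms and formulas in negation normal form -/

/-- First-order terms: variables and function symbols are named by natural numbers.
(A function symbol together with the number of arguments it is applied to plays the
role of a symbol of fixed finite arity; there are countably many symbols of each arity.) -/
inductive Term : Type where
  | var : ℕ → Term
  | fn  : ℕ → List Term → Term

/-- The variable `x` occurs in the term. -/
inductive Term.HasVar : Term → ℕ → Prop where
  | var (x : ℕ) : HasVar (.var x) x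
  | fn {f : ℕ} {ts : List Term} {t : Term} {x : ℕ} :
      t ∈ ts → HasVar t x → HasVar (.fn f ts) x

/-- Simultaneous substitution on terms. -/
def Term.subst (σ : ℕ → Term) : Term → Term
  | .var x => σ x
  | .fn f ts => .fn f (ts.attach.map fun t => t.1.subst σ)
decreasing_by
  have := List.sizeOf_lt_of_mem t.2
  simp at *; omega

/-- Renaming of variables in a term. -/
def Term.rename (ρ : ℕ → ℕ) (t : Term) : Term := t.subst (fun x => .var (ρ x))

/-- Formulas in negation normal form: `pos p ts` is the atom `p(ts)` and
`neg p ts` is the atom `p̄(ts)` built from the dual predicate symbol. -/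
inductive Form : Type where
  | pos : ℕ → List Term → Form
  | neg : ℕ → List Term → Form
  | top : Form
  | bot : Form
  | and : Form → Form → Form
  | or  : Form → Form → Form
  | all : ℕ → Form → Form
  | ex  : ℕ → Form → Form

namespace Form

/-- Atoms: `⊤`, `⊥`, `p(ts)`, `p̄(ts)`. -/
def IsAtom : Form → Prop
  | pos _ _ => True
  | neg _ _ => True
  | top => True
  | bot => True
  | _ => False

/-- Negation, defined via De Morgan duality. -/
def negf : Form → Form
  | pos p ts => neg p ts
  | neg p ts => pos p ts
  | top => bot
  | bot => top
  | and A B => or A.negf B.negf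
  | or A B => and A.negf B.negf
  | all x A => ex x A.negf
  | ex x A => all x A.negf

/-- The variable `x` occurs free in the formula. -/
inductive FreeVar : Form → ℕ → Prop where
  | pos {p ts t x} : t ∈ ts → Term.HasVar t x → FreeVar (pos p ts) x
  | neg {p ts t x} : t ∈ ts → Term.HasVar t x → FreeVar (neg p ts) x
  | andl {A B x} : FreeVar A x → FreeVar (and A B) x
  | andr {A B x} : FreeVar B x → FreeVar (and A B) x
  | orl {A B x} : FreeVar A x → FreeVar (or A B) x
  | orr {A B x} : FreeVar B x → FreeVar (or A B) x
  | all {A x y} : FreeVar A x → x ≠ y → FreeVar (all y A) x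
  | ex {A x y} : FreeVar A x → x ≠ y → FreeVar (ex y A) x

/-- Substitution of the term `u` for all free occurrences of the variable `x`. -/
def subst1 (x : ℕ) (u : Term) : Form → Form
  | pos p ts => pos p (ts.map (Term.subst (fun y => if y = x then u else .var y)))
  | neg p ts => neg p (ts.map (Term.subst (fun y => if y = x then u else .var y)))
  | top => top
  | bot => bot
  | and A B => and (A.subst1 x u) (B.subst1 x u)
  | or A B => or (A.subst1 x u) (B.subst1 x u)
  | all y A => if y = x then all y A else all y (A.subst1 x u)
  | ex y A => if y = x then ex y A else ex y (A.subst1 x u)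

/-- Application of a variable renaming to a formula, renaming all occurrences
of variables (both free and bound). -/
def renameAll (ρ : ℕ → ℕ) : Form → Form
  | pos p ts => pos p (ts.map (Term.rename ρ))
  | neg p ts => neg p (ts.map (Term.rename ρ))
  | top => top
  | bot => bot
  | and A B => and (A.renameAll ρ) (B.renameAll ρ)
  | or A B => or (A.renameAll ρ) (B.renameAll ρ)
  | all y A => all (ρ y) (A.renameAll ρ)
  | ex y A => ex (ρ y) (A.renameAll ρ)

/-- The formula contains no occurrence of `⊥`. -/
def BotFree : Form → Prop
  | bot => False
  | and A B => BotFree A ∧ BotFree B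
  | or A B => BotFree A ∧ BotFree B
  | all _ A => BotFree A
  | ex _ A => BotFree A
  | _ => True

/-- Formula equivalence `≡`: the smallest congruence generated by commutativity and
associativity of `∧` and `∨`, commutation of like quantifiers, and the scope equations
`∀x.(A∨B) ≡ (∀x.A)∨B` and `∃x.(A∧B) ≡ (∃x.A)∧B` when `x` is not free in `B`. -/
inductive Equiv : Form → Form → Prop where
  | refl (A) : Equiv A A
  | symm {A B} : Equiv A B → Equiv B A
  | trans {A B C} : Equiv A B → Equiv B C → Equiv A C
  | andCongr {A A' B B'} : Equiv A A' → Equiv B B' → Equiv (and A B) (and A' B')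
  | orCongr {A A' B B'} : Equiv A A' → Equiv B B' → Equiv (or A B) (or A' B')
  | allCongr {A A'} (x) : Equiv A A' → Equiv (all x A) (all x A')
  | exCongr {A A'} (x) : Equiv A A' → Equiv (ex x A) (ex x A')
  | andComm (A B) : Equiv (and A B) (and B A)
  | orComm (A B) : Equiv (or A B) (or B A)
  | andAssoc (A B C) : Equiv (and (and A B) C) (and A (and B C))
  | orAssoc (A B C) : Equiv (or (or A B) C) (or A (or B C))
  | allSwap (x y A) : Equiv (all x (all y A)) (all y (all x A))
  | exSwap (x y A) : Equiv (ex x (ex y A)) (ex y (ex x A))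
  | allOr (x A B) (h : ¬ FreeVar B x) : Equiv (all x (or A B)) (or (all x A) B)
  | exAnd (x A B) (h : ¬ FreeVar B x) : Equiv (ex x (and A B)) (and (ex x A) B)

/-- The list of binding occurrences of variables in a formula. -/
def bvList : Form → List ℕ
  | and A B => A.bvList ++ B.bvList
  | or A B => A.bvList ++ B.bvList
  | all x A => x :: A.bvList
  | ex x A => x :: A.bvList
  | _ => []

/-- A formula is rectified if all bound variables are distinct from one
another and from all free variables. -/
def Rectified (A : Form) : Prop :=
  A.bvList.Nodup ∧ ∀ x ∈ A.bvList, ¬ A.FreeVar x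

/-- The variable `x` occurs (free or bound) in the formula. -/
def VarOccurs (A : Form) (x : ℕ) : Prop := A.FreeVar x ∨ x ∈ A.bvList

/-- The disjunction `⋁Γ` of the formulas of a sequent (written as a list);
by convention the empty disjunction is `⊥`. -/
def bigOr : List Form → Form
  | [] => bot
  | [A] => A
  | A :: B :: Γ => or A (bigOr (B :: Γ))

end Form

/-- α-conversion: renaming of bound variables. -/
inductive Alpha : Form → Form → Prop where
  | refl (A) : Alpha A A
  | symm {A B} : Alpha A B → Alpha B A
  | trans {A B C} : Alpha A B → Alpha B C → Alpha A C
  | andCongr {A A' B B'} : Alpha A A' → Alpha B B' → Alpha (.and A B) (.and A' B')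
  | orCongr {A A' B B'} : Alpha A A' → Alpha B B' → Alpha (.or A B) (.or A' B')
  | allCongr {A A'} (x) : Alpha A A' → Alpha (.all x A) (.all x A')
  | exCongr {A A'} (x) : Alpha A A' → Alpha (.ex x A) (.ex x A')
  | allRen (x y A) (h : ¬ A.VarOccurs y) :
      Alpha (.all x A) (.all y (A.subst1 x (.var y)))
  | exRen (x y A) (h : ¬ A.VarOccurs y) :
      Alpha (.ex x A) (.ex y (A.subst1 x (.var y)))

/-- `B` is a rectification of `A`: a rectified form of `A` obtained by renaming
bound variables. -/
def IsRectification (B A : Form) : Prop := Alpha A B ∧ B.Rectified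

/-! ## Deep inference -/

/-- A (positive) context: a formula with exactly one hole in atom position. -/
inductive Ctx : Type where
  | hole : Ctx
  | andL : Ctx → Form → Ctx
  | andR : Form → Ctx → Ctx
  | orL  : Ctx → Form → Ctx
  | orR  : Form → Ctx → Ctx
  | all  : ℕ → Ctx → Ctx
  | ex   : ℕ → Ctx → Ctx

/-- `S.fill A` replaces the hole of `S` by `A`. -/
def Ctx.fill : Ctx → Form → Form
  | .hole, A => A
  | .andL S B, A => .and (S.fill A) B
  | .andR B S, A => .and B (S.fill A)
  | .orL S B, A => .or (S.fill A) B
  | .orR B S, A => .or B (S.fill A)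
  | .all x S, A => .all x (S.fill A)
  | .ex x S, A => .ex x (S.fill A)

/-- The names of the deep inference rules. -/
inductive RuleName : Type where
  | allTop   -- ∀⊤
  | aiDown   -- ai↓
  | tDown    -- t↓
  | s        -- switch
  | mix      -- mix
  | exR      -- ∃
  | equivR   -- ≡
  | wDown    -- w↓
  | m        -- medial
  | acDown   -- ac↓
  | mAll     -- m∀
  | mEx      -- m∃
  | wAll     -- w∀
  | cAll     -- c∀
  | cDown    -- general contraction c↓
  deriving DecidableEq

/-- Shallow instances of the deep inference rules: `Shallow r P Q` means that the
rule `r` rewrites the premise `P` into the conclusion `Q` (with the empty context). -/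
inductive Shallow : RuleName → Form → Form → Prop where
  | allTop (x : ℕ) : Shallow .allTop .top (.all x .top)
  | aiDown (a : Form) (h : a.IsAtom) : Shallow .aiDown .top (.or a a.negf)
  | tDown (A : Form) : Shallow .tDown A (.and A .top)
  | s (A B C : Form) : Shallow .s (.and A (.or B C)) (.or (.and A B) C)
  | mix (A B : Form) : Shallow .mix (.and A B) (.or A B)
  | exR (x : ℕ) (t : Term) (A : Form) : Shallow .exR (A.subst1 x t) (.ex x A)
  | equivR {A B : Form} (h : Form.Equiv A B) : Shallow .equivR B A
  | wDown (A B : Form) : Shallow .wDown A (.or A B)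
  | m (A B C D : Form) :
      Shallow .m (.or (.and A C) (.and B D)) (.and (.or A B) (.or C D))
  | acDown (a : Form) (h : a.IsAtom) : Shallow .acDown (.or a a) a
  | mAll (x : ℕ) (A B : Form) :
      Shallow .mAll (.or (.all x A) (.all x B)) (.all x (.or A B))
  | mEx (x : ℕ) (A B : Form) :
      Shallow .mEx (.or (.ex x A) (.ex x B)) (.ex x (.or A B))
  | wAll (x : ℕ) (A : Form) (h : ¬ A.FreeVar x) : Shallow .wAll A (.all x A)
  | cAll (x : ℕ) (A : Form) : Shallow .cAll (.all x (.all x A)) (.all x A)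
  | cDown (A : Form) : Shallow .cDown (.or A A) A

/-- One deep inference step using a rule from `R`, applied inside a context. -/
def Step (R : Set RuleName) (A B : Form) : Prop :=
  ∃ r ∈ R, ∃ (S : Ctx) (P Q : Form), Shallow r P Q ∧ A = S.fill P ∧ B = S.fill Q

/-- `Deriv R A B`: there is a derivation from `A` to `B` using only rules from `R`
(a finite sequence of deep inference steps rewriting `A` into `B`). -/
def Deriv (R : Set RuleName) : Form → Form → Prop :=
  Relation.ReflTransGen (Step R)

/-- A formula is provable in a system if there is a derivation from `⊤` to it. -/
def Provable (R : Set RuleName) (A : Form) : Prop := Deriv R .top A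

/-- The linear system `MLS1X`. -/
def MLS1X : Set RuleName :=
  {RuleName.allTop, RuleName.aiDown, RuleName.tDown, RuleName.s, RuleName.mix,
   RuleName.exR, RuleName.equivR}

/-- The system `KS1`. -/
def KS1 : Set RuleName :=
  {RuleName.allTop, RuleName.aiDown, RuleName.tDown, RuleName.s, RuleName.mix,
   RuleName.exR, RuleName.equivR, RuleName.wDown, RuleName.m, RuleName.acDown,
   RuleName.mAll, RuleName.mEx, RuleName.wAll, RuleName.cAll}

/-!
Each rule of either system is derivable in the other; since derivations can be carried out
inside any context, derivations then translate step by step. General contraction reduces to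
atomic contraction by induction on the formula: the medial rules `m`, `m∀`, `m∃` push a
contraction `A ∨ A ⟹ A` towards the atoms, and for a disjunction `≡` regroups
`(A ∨ B) ∨ (A ∨ B)` into `(A ∨ A) ∨ (B ∨ B)`. Conversely, with `w↓` and `c↓` every medial rule
is obtained by weakening each disjunct of the premise to the conclusion and then contracting,
while `w∀` and `c∀` follow from the scope equation `∀x.(A ∨ B) ≡ (∀x.A) ∨ B`.
-/

def Ctx.comp : Ctx → Ctx → Ctx
  | .hole, T => T
  | .andL S B, T => .andL (S.comp T) B
  | .andR B S, T => .andR B (S.comp T)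
  | .orL S B, T => .orL (S.comp T) B
  | .orR B S, T => .orR B (S.comp T)
  | .all x S, T => .all x (S.comp T)
  | .ex x S, T => .ex x (S.comp T)

theorem Ctx.fill_comp (S T : Ctx) (A : Form) : (S.comp T).fill A = S.fill (T.fill A) := by
  induction S <;> simp [Ctx.comp, Ctx.fill, *]

theorem Form.Equiv.or_or_or_comm (A B C D : Form) :
    Form.Equiv (.or (.or A B) (.or C D)) (.or (.or A C) (.or B D)) :=
  have regroup : Form.Equiv (.or B (.or C D)) (.or C (.or B D)) :=
    .trans (.symm (.orAssoc B C D)) (.trans (.orCongr (.orComm B C) (.refl D)) (.orAssoc C B D))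
  .trans (.orAssoc A B _) (.trans (.orCongr (.refl A) regroup) (.symm (.orAssoc A C _)))

theorem Step.fill {R : Set RuleName} (S : Ctx) {A B : Form} (h : Step R A B) :
    Step R (S.fill A) (S.fill B) := by
  obtain ⟨r, hr, T, P, Q, hs, rfl, rfl⟩ := h
  exact ⟨r, hr, S.comp T, P, Q, hs, (Ctx.fill_comp S T P).symm, (Ctx.fill_comp S T Q).symm⟩

namespace Deriv

variable {R : Set RuleName}

theorem fill (S : Ctx) {A B : Form} (h : Deriv R A B) : Deriv R (S.fill A) (S.fill B) :=
  Relation.ReflTransGen.lift S.fill (fun _ _ => Step.fill S) _ _ h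

theorem of_shallow {r : RuleName} (hr : r ∈ R) {P Q : Form} (h : Shallow r P Q) :
    Deriv R P Q :=
  .single ⟨r, hr, .hole, P, Q, h, rfl, rfl⟩

theorem of_equiv (he : RuleName.equivR ∈ R) {A B : Form} (h : Form.Equiv A B) : Deriv R A B :=
  of_shallow he (.equivR h.symm)

theorem of_deriv_of_shallow {R' : Set RuleName}
    (H : ∀ r ∈ R, ∀ P Q : Form, Shallow r P Q → Deriv R' P Q) {A B : Form}
    (h : Deriv R A B) : Deriv R' A B := by
  induction h with
  | refl => exact .refl
  | tail _ hstep ih =>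
    obtain ⟨r, hr, S, P, Q, hs, rfl, rfl⟩ := hstep
    exact ih.trans (fill S (H r hr P Q hs))

theorem or_self_of_medial (hac : RuleName.acDown ∈ R) (hm : RuleName.m ∈ R)
    (hmAll : RuleName.mAll ∈ R) (hmEx : RuleName.mEx ∈ R) (he : RuleName.equivR ∈ R)
    (A : Form) : Deriv R (.or A A) A := by
  induction A with
  | pos | neg | top | bot => exact of_shallow hac (.acDown _ trivial)
  | and A B ihA ihB =>
    exact (of_shallow hm (.m A A B B)).trans
      ((fill (.andL .hole (.or B B)) ihA).trans (fill (.andR A .hole) ihB))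
  | or A B ihA ihB =>
    exact (of_equiv he (Form.Equiv.or_or_or_comm A B A B)).trans
      ((fill (.orL .hole (.or B B)) ihA).trans (fill (.orR A .hole) ihB))
  | all x A ih => exact (of_shallow hmAll (.mAll x A A)).trans (fill (.all x .hole) ih)
  | ex x A ih => exact (of_shallow hmEx (.mEx x A A)).trans (fill (.ex x .hole) ih)

theorem or_elim (hc : RuleName.cDown ∈ R) {X Y Z : Form} (hX : Deriv R X Z)
    (hY : Deriv R Y Z) : Deriv R (.or X Y) Z :=
  ((fill (.orL .hole Y) hX).trans (fill (.orR Z .hole) hY)).trans (of_shallow hc (.cDown Z))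

theorem or_right (hw : RuleName.wDown ∈ R) (he : RuleName.equivR ∈ R) (A B : Form) :
    Deriv R B (.or A B) :=
  (of_shallow hw (.wDown B A)).trans (of_equiv he (.orComm B A))

theorem medial (hw : RuleName.wDown ∈ R) (hc : RuleName.cDown ∈ R) (he : RuleName.equivR ∈ R)
    (A B C D : Form) : Deriv R (.or (.and A C) (.and B D)) (.and (.or A B) (.or C D)) :=
  or_elim hc
    ((fill (.andL .hole C) (of_shallow hw (.wDown A B))).trans
      (fill (.andR (.or A B) .hole) (of_shallow hw (.wDown C D))))
    ((fill (.andL .hole D) (or_right hw he A B)).trans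
      (fill (.andR (.or A B) .hole) (or_right hw he C D)))

theorem all_or_all (hw : RuleName.wDown ∈ R) (hc : RuleName.cDown ∈ R)
    (he : RuleName.equivR ∈ R) (x : ℕ) (A B : Form) :
    Deriv R (.or (.all x A) (.all x B)) (.all x (.or A B)) :=
  or_elim hc (fill (.all x .hole) (of_shallow hw (.wDown A B)))
    (fill (.all x .hole) (or_right hw he A B))

theorem ex_or_ex (hw : RuleName.wDown ∈ R) (hc : RuleName.cDown ∈ R)
    (he : RuleName.equivR ∈ R) (x : ℕ) (A B : Form) :
    Deriv R (.or (.ex x A) (.ex x B)) (.ex x (.or A B)) :=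
  or_elim hc (fill (.ex x .hole) (of_shallow hw (.wDown A B)))
    (fill (.ex x .hole) (or_right hw he A B))

theorem all_of_not_freeVar (hw : RuleName.wDown ∈ R) (hc : RuleName.cDown ∈ R)
    (he : RuleName.equivR ∈ R) {x : ℕ} {A : Form} (h : ¬ A.FreeVar x) :
    Deriv R A (.all x A) :=
  have scope : Form.Equiv (.or A (.all x A)) (.all x (.or A A)) :=
    .trans (.orComm A _) (.symm (.allOr x A A h))
  ((of_shallow hw (.wDown A (.all x A))).trans (of_equiv he scope)).trans
    (fill (.all x .hole) (of_shallow hc (.cDown A)))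

theorem all_all (hw : RuleName.wDown ∈ R) (hc : RuleName.cDown ∈ R)
    (he : RuleName.equivR ∈ R) (x : ℕ) (A : Form) :
    Deriv R (.all x (.all x A)) (.all x A) :=
  have not_free : ¬ (Form.all x A).FreeVar x := fun | .all _ hne => hne rfl
  have scope : Form.Equiv (.all x (.or (.all x A) A)) (.or (.all x A) (.all x A)) :=
    .trans (.allCongr x (.orComm _ A)) (.allOr x A _ not_free)
  ((fill (.all x .hole) (of_shallow hw (.wDown (.all x A) A))).trans (of_equiv he scope)).trans
    (of_shallow hc (.cDown (.all x A)))

theorem of_wc_deriv (hw : RuleName.wDown ∈ R) (hac : RuleName.acDown ∈ R)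
    (hm : RuleName.m ∈ R) (hmAll : RuleName.mAll ∈ R) (hmEx : RuleName.mEx ∈ R)
    (he : RuleName.equivR ∈ R) {A B : Form}
    (h : Deriv {RuleName.wDown, RuleName.cDown, RuleName.equivR} A B) : Deriv R A B := by
  refine of_deriv_of_shallow (fun r hr P Q hs => ?_) h
  cases hs with
  | wDown => exact of_shallow hw (.wDown _ _)
  | cDown => exact or_self_of_medial hac hm hmAll hmEx he _
  | equivR h => exact of_shallow he (.equivR h)
  | _ => simp at hr

theorem of_atomic_deriv (hw : RuleName.wDown ∈ R) (hc : RuleName.cDown ∈ R)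
    (he : RuleName.equivR ∈ R) {A B : Form}
    (h : Deriv {RuleName.wDown, RuleName.wAll, RuleName.acDown, RuleName.cAll,
      RuleName.m, RuleName.mAll, RuleName.mEx, RuleName.equivR} A B) : Deriv R A B := by
  refine of_deriv_of_shallow (fun r hr P Q hs => ?_) h
  cases hs with
  | wDown => exact of_shallow hw (.wDown _ _)
  | wAll _ _ h => exact all_of_not_freeVar hw hc he h
  | acDown => exact of_shallow hc (.cDown _)
  | cAll => exact all_all hw hc he _ _
  | m => exact medial hw hc he _ _ _ _
  | mAll => exact all_or_all hw hc he _ _ _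
  | mEx => exact ex_or_ex hw hc he _ _ _
  | equivR h => exact of_shallow he (.equivR h)
  | _ => simp at hr

end Deriv

/-- Derivability in `{w↓, c↓, ≡}` coincides with derivability
in `{w↓, w∀, ac↓, c∀, m, m∀, m∃, ≡}`. -/
theorem wc_iff_atomic (A B : Form) :
    Deriv {RuleName.wDown, RuleName.cDown, RuleName.equivR} A B ↔
    Deriv {RuleName.wDown, RuleName.wAll, RuleName.acDown, RuleName.cAll,
           RuleName.m, RuleName.mAll, RuleName.mEx, RuleName.equivR} A B :=
  ⟨Deriv.of_wc_deriv (by simp) (by simp) (by simp) (by simp) (by simp) (by simp),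
    Deriv.of_atomic_deriv (by simp) (by simp) (by simp)⟩
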